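/- arXiv:0810.3131 — 2 statements merged into one kernel-verified Lean document; each statement's English description precedes it below -/
import Mathlib

section
/- The ⋆-product of q-symmetric generating series is associative: for any three q-symmetric generating series 𝒜(ū), ℬ(ū), 𝒞(ū) one has (𝒜 ⋆ ℬ) ⋆ 𝒞 = 𝒜 ⋆ (ℬ ⋆ 𝒞), i.e. for every multi-index n̄ the coefficients of both sides at u_1^{n_1}⋯u_{N−1}^{n_{N−1}} coincide. -/
/-!
Both sides expand into double sums of `q`-symmetrized products of `𝒜`, `ℬ`, `𝒞` and two `Z`
factors, and two facts match the summands.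

First, the outer symmetrization `Sym̄_{t̄_{n̄}}` absorbs the inner one. After the shift of
variables, the inner symmetrization permutes a window of consecutive variables of each type, and
`π` of a window permutation is `π` of its extension by the identity: such a permutation inverts
only pairs inside the window. As `π` is an action, `Sym̄_{t̄_{n̄}} ∘ π(τ) = Sym̄_{t̄_{n̄}}`, and the
factors outside the inner symmetrization are invariant under the window permutations.

Second, the `Z` factors satisfy the cocycle identity
`Z_{s̄}(t̄_{n̄}) Z_{r̄}(t̄_{(s̄,n̄]}) = Z_{s̄+r̄}(t̄_{n̄}) Z_{s̄}(t̄_{s̄+r̄})`. The substitution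
`(s̄, r̄) ↦ (s̄ + r̄, s̄)` then identifies the two double sums.
-/

noncomputable section

open scoped TensorProduct
open MvPolynomial

/-! ## Rational functions and the q-symmetrization machinery -/

variable (K : Type) [Field K] (ι : Type)

/-- The field `K(t)` of rational functions in the variables `t_i`, `i : ι`. -/
abbrev RatF := FractionRing (MvPolynomial ι K)

/-- The variable `t_i` as a rational function. -/
def tvar (i : ι) : RatF K ι := algebraMap (MvPolynomial ι K) (RatF K ι) (X i)

/-- A scalar `c : K` as a constant rational function. -/
def cst (c : K) : RatF K ι := algebraMap K (RatF K ι) c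

/-- Substitution of variables `t_i ↦ t_{f i}` along an injective map `f`, as a `K`-algebra
endomorphism of the field of rational functions. -/
def renHom (f : ι → ι) (hf : Function.Injective f) : RatF K ι →ₐ[K] RatF K ι :=
  IsFractionRing.liftAlgHom (R := K)
    (g := (IsScalarTower.toAlgHom K (MvPolynomial ι K) (RatF K ι)).comp (rename f))
    ((IsFractionRing.injective _ _).comp (rename_injective f hf))

variable (A : Type) [Ring A] [Algebra K A]

/-- The algebra `A(t) = A ⊗_K K(t)` of `A`-valued rational functions. -/
abbrev AVal := A ⊗[K] RatF K ι

/-- The embedding `K(t) → A(t)`. -/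
def inF : RatF K ι →ₐ[K] AVal K ι A := Algebra.TensorProduct.includeRight

/-- Substitution of variables `t_i ↦ t_{f i}` on `A`-valued rational functions. -/
def renA (f : ι → ι) (hf : Function.Injective f) : AVal K ι A →ₐ[K] AVal K ι A :=
  Algebra.TensorProduct.map (AlgHom.id K A) (renHom K ι f hf)

/-- Extension of a permutation of `Fin k` to a permutation of the whole variable index set `ι`
along an injective enumeration `v : Fin k → ι` of some of the variables. -/
def extPerm {k : ℕ} (v : Fin k → ι) (hv : Function.Injective v) (σ : Equiv.Perm (Fin k)) :
    Equiv.Perm ι :=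
  letI := Classical.decPred (· ∈ Set.range v)
  σ.extendDomain (Equiv.ofInjective v hv)

variable (q : K)

/-- The elementary weight `w(t_i/t_j) = (q⁻¹ − q t_i/t_j)/(q − q⁻¹ t_i/t_j)`. -/
def wfac (i j : ι) : RatF K ι :=
  (cst K ι q⁻¹ - cst K ι q * (tvar K ι i / tvar K ι j)) /
    (cst K ι q - cst K ι q⁻¹ * (tvar K ι i / tvar K ι j))

/-- The weight `∏_{ℓ<ℓ', σ(ℓ)>σ(ℓ')} w(t_{σ(ℓ')}/t_{σ(ℓ)})` of the operator `π(σ)` acting on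
functions of the variables `t_{v 0}, …, t_{v (k-1)}`. -/
def qWeight {k : ℕ} (v : Fin k → ι) (σ : Equiv.Perm (Fin k)) : RatF K ι :=
  ∏ p ∈ Finset.univ.filter (fun p : Fin k × Fin k => p.1 < p.2 ∧ σ p.2 < σ p.1),
    wfac K ι q (v (σ p.2)) (v (σ p.1))

/-- The operator `π(σ)`, `σ ∈ S_k`:
`π(σ)G = ∏_{ℓ<ℓ', σ(ℓ)>σ(ℓ')} w(t_{σ(ℓ')}/t_{σ(ℓ)}) ⬝ G(t_{σ(1)},…,t_{σ(k)})`, acting on `A`-valued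
rational functions of the variables `t_{v 0}, …, t_{v (k-1)}`. -/
def piOp {k : ℕ} (v : Fin k → ι) (hv : Function.Injective v) (σ : Equiv.Perm (Fin k)) :
    AVal K ι A → AVal K ι A := fun G =>
  inF K ι A (qWeight K ι q v σ) * renA K ι A (extPerm ι v hv σ) (Equiv.injective _) G

/-- The operator `π(σ_{i,j})` attached to a transposition:
`π(σ_{i,j})G = w(t_i/t_j) ⬝ (G with t_i, t_j interchanged)`.  For `j = i+1` this is the
operator `π(σ_{i,i+1})` of the paper. -/
def piElem (i j : ι) : AVal K ι A → AVal K ι A := fun G =>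
  letI := Classical.decEq ι
  inF K ι A (wfac K ι q i j) * renA K ι A (Equiv.swap i j) (Equiv.injective _) G

/-- The `q`-symmetrization operator `Sym̄ = (1/k!) ∑_{σ ∈ S_k} π(σ)` over the variables
`t_{v 0}, …, t_{v (k-1)}`. -/
def qSym {k : ℕ} (v : Fin k → ι) (hv : Function.Injective v) :
    AVal K ι A → AVal K ι A := fun G =>
  ((k.factorial : K))⁻¹ • ∑ σ : Equiv.Perm (Fin k), piOp K ι A q v hv σ G

/-! ## Multi-type generating series -/

/-- For the algebra with `N − 1` types of variables, the variables are `t^a_i`, indexed by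
pairs `(a, i) : ℕ × ℕ` (the type `a` and the position `i`). -/
abbrev ιM : Type := ℕ × ℕ

/-- The enumeration of the first `m` variables of type `a`. -/
def vtype (a m : ℕ) : Fin m → ιM := fun i => (a, (i : ℕ))

theorem vtype_inj (a m : ℕ) : Function.Injective (vtype a m) := fun x y h =>
  Fin.val_injective (congrArg Prod.snd h)

/-- The `q`-symmetrization over the variables `t̄_{n̄}`, applied independently to the variables
of each type: for each type `a` the first `n̄ a` variables of that type are `q`-symmetrized. -/
def symM (n : ℕ →₀ ℕ) : AVal K ιM A → AVal K ιM A :=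
  (n.support.sort (· ≤ ·)).foldr
    (fun a F => (qSym K ιM A q (vtype a (n a)) (vtype_inj a (n a)) ∘ F)) id

/-- The shift of variables `t^a_i ↦ t^a_{i + s a}` (each type shifted by its own amount). -/
def shiftFun (s : ℕ → ℕ) : ιM → ιM := fun x => (x.1, x.2 + s x.1)

theorem shiftFun_inj (s : ℕ → ℕ) : Function.Injective (shiftFun s) := by
  rintro ⟨a, i⟩ ⟨b, j⟩ h
  simp only [shiftFun, Prod.mk.injEq] at h
  obtain ⟨rfl, h2⟩ := h
  simp only [Prod.mk.injEq, true_and]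
  omega

/-- The rational series `Z_{s̄}(t̄_{n̄})`. -/
def Zser (N : ℕ) (s n : ℕ →₀ ℕ) : RatF K ιM :=
  ∏ a ∈ Finset.range (N - 2), ∏ l ∈ Finset.Ico (s a) (n a), ∏ l' ∈ Finset.range (s (a + 1)),
    (cst K ιM q - cst K ιM q⁻¹ * (tvar K ιM (a, l) / tvar K ιM (a + 1, l'))) /
      (1 - tvar K ιM (a, l) / tvar K ιM (a + 1, l'))

/-- A `q`-symmetric generating series in the parameters `u_1, …, u_{N-1}`: the family of its
coefficients `𝒜(t̄_{n̄})`, indexed by multi-indices `n̄` (finitely supported, and supported on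
the types `1, …, N−1`, represented `0`-based as `{0, …, N−2}`); the coefficient `𝒜(t̄_{n̄})`
is an `A`-valued rational function depending only on the variables `t̄_{n̄}`, `q`-symmetric in
the variables of each type, and the free coefficient is `1`. -/
structure QSeriesM (N : ℕ) : Type where
  /-- The coefficient at `u_1^{n̄ 0} ⋯ u_{N-1}^{n̄ (N-2)}`. -/
  coeff : (ℕ →₀ ℕ) → AVal K ιM A
  coeff_zero : coeff 0 = 1
  supp_types : ∀ n : ℕ →₀ ℕ, (¬ ∀ a, N - 1 ≤ a → n a = 0) → coeff n = 0
  qsymm : ∀ (n : ℕ →₀ ℕ) (a : ℕ) (σ : Equiv.Perm (Fin (n a))),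
    piOp K ιM A q (vtype a (n a)) (vtype_inj a (n a)) σ (coeff n) = coeff n
  supp_vars : ∀ (n : ℕ →₀ ℕ) (f : ιM → ιM) (hf : Function.Injective f),
    (∀ a i, i < n a → f (a, i) = (a, i)) → renA K ιM A f hf (coeff n) = coeff n

/-- The coefficient at `u^{n̄}` of the `⋆`-product of two generating series given by their
coefficient families:
`(𝒜⋆ℬ)(t̄_{n̄}) = ∑_{0̄ ≤ s̄ ≤ n̄} Sym̄_{t̄_{n̄}}( Z_{s̄}(t̄_{n̄}) ⬝ 𝒜(t̄_{(s̄,n̄]}) ⬝ ℬ(t̄_{(0̄,s̄]}) )`. -/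
def starM (N : ℕ) (f g : (ℕ →₀ ℕ) → AVal K ιM A) (n : ℕ →₀ ℕ) : AVal K ιM A :=
  ∑ s ∈ Finset.Iic n,
    symM K A q n
      (inF K ιM A (Zser K q N s n) *
        (renA K ιM A (shiftFun (s ·)) (shiftFun_inj _) (f (n - s)) * g s))

/-- The coefficients of the unit generating series `1`. -/
def oneM : (ℕ →₀ ℕ) → AVal K ιM A := fun n => if n = 0 then 1 else 0

/-- A multi-index is admissible if `n_1 ≥ n_2 ≥ ⋯`. -/
def Adm (n : ℕ →₀ ℕ) : Prop := ∀ a, n (a + 1) ≤ n a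


section Renaming

variable {K : Type} [Field K] {ι : Type}

theorem tvar_ne_zero (i : ι) : tvar K ι i ≠ 0 :=
  (map_ne_zero_iff _ (IsFractionRing.injective (MvPolynomial ι K) (RatF K ι))).mpr (X_ne_zero i)

theorem renHom_algebraMap (f : ι → ι) (hf : Function.Injective f) (p : MvPolynomial ι K) :
    renHom K ι f hf (algebraMap (MvPolynomial ι K) (RatF K ι) p)
      = algebraMap (MvPolynomial ι K) (RatF K ι) (rename f p) := by
  simp [renHom, IsFractionRing.liftAlgHom, IsLocalization.liftAlgHom_apply, IsLocalization.lift_eq]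

theorem renHom_tvar (f : ι → ι) (hf : Function.Injective f) (i : ι) :
    renHom K ι f hf (tvar K ι i) = tvar K ι (f i) := by
  rw [tvar, renHom_algebraMap, rename_X, tvar]

theorem renHom_cst (f : ι → ι) (hf : Function.Injective f) (c : K) :
    renHom K ι f hf (cst K ι c) = cst K ι c :=
  AlgHom.commutes _ c

theorem renHom_comp (f g : ι → ι) (hf : Function.Injective f) (hg : Function.Injective g)
    (x : RatF K ι) :
    renHom K ι f hf (renHom K ι g hg x) = renHom K ι (f ∘ g) (hf.comp hg) x := by
  suffices (renHom K ι f hf).comp (renHom K ι g hg) = renHom K ι (f ∘ g) (hf.comp hg) from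
    DFunLike.congr_fun this x
  refine AlgHom.coe_ringHom_injective (IsLocalization.ringHom_ext
    (nonZeroDivisors (MvPolynomial ι K)) (RingHom.ext fun p => ?_))
  simp [renHom_algebraMap, rename_rename]

theorem renHom_id (x : RatF K ι) : renHom K ι id Function.injective_id x = x := by
  suffices renHom K ι id Function.injective_id = AlgHom.id K (RatF K ι) from
    DFunLike.congr_fun this x
  refine AlgHom.coe_ringHom_injective (IsLocalization.ringHom_ext
    (nonZeroDivisors (MvPolynomial ι K)) (RingHom.ext fun p => ?_))
  simp [renHom_algebraMap]

variable {A : Type} [Ring A] [Algebra K A]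

theorem renA_inF (f : ι → ι) (hf : Function.Injective f) (z : RatF K ι) :
    renA K ι A f hf (inF K ι A z) = inF K ι A (renHom K ι f hf z) := by
  simp [renA, inF]

theorem commute_inF (z : RatF K ι) (G : AVal K ι A) : Commute (inF K ι A z) G := by
  induction G using TensorProduct.induction_on with
  | zero => exact Commute.zero_right _
  | tmul a f => simp [Commute, SemiconjBy, inF, mul_comm]
  | add x y hx hy => exact hx.add_right hy

theorem renA_comp (f g : ι → ι) (hf : Function.Injective f) (hg : Function.Injective g)
    (x : AVal K ι A) :
    renA K ι A f hf (renA K ι A g hg x) = renA K ι A (f ∘ g) (hf.comp hg) x := by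
  induction x using TensorProduct.induction_on with
  | zero => simp
  | tmul a h => simp [renA, renHom_comp]
  | add x y hx hy => simp only [map_add, hx, hy]

theorem renA_id (x : AVal K ι A) : renA K ι A id Function.injective_id x = x := by
  induction x using TensorProduct.induction_on with
  | zero => simp
  | tmul a h => simp [renA, renHom_id]
  | add x y hx hy => simp only [map_add, hx, hy]

theorem renA_congr {f g : ι → ι} (hf : Function.Injective f) (hg : Function.Injective g)
    (h : f = g) (x : AVal K ι A) : renA K ι A f hf x = renA K ι A g hg x := by
  subst h; rfl

end Renaming

section Weights

open Finset

variable {K : Type} [Field K] {ι : Type} {q : K}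

theorem cst_mul_tvar_ne (hq : q ≠ 0) {i j : ι} (hij : i ≠ j) :
    cst K ι q⁻¹ * tvar K ι i ≠ cst K ι q * tvar K ι j := by
  classical
  intro h
  have hcst (c : K) : cst K ι c = algebraMap (MvPolynomial ι K) (RatF K ι) (C c) :=
    IsScalarTower.algebraMap_apply K (MvPolynomial ι K) (RatF K ι) c
  have hpoly : C q⁻¹ * X i = (C q * X j : MvPolynomial ι K) := by
    apply IsFractionRing.injective (MvPolynomial ι K) (RatF K ι)
    rwa [map_mul, map_mul, ← hcst, ← hcst]
  have := congrArg (coeff (Finsupp.single j 1)) hpoly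
  simp [coeff_C_mul, coeff_X, Finsupp.single_eq_single_iff, hij] at this
  exact hq this.symm

theorem wfac_den_ne_zero (hq : q ≠ 0) {i j : ι} (hij : i ≠ j) :
    cst K ι q - cst K ι q⁻¹ * (tvar K ι i / tvar K ι j) ≠ 0 := by
  rw [sub_ne_zero, ← mul_div_assoc, Ne, eq_div_iff (tvar_ne_zero j), eq_comm]
  exact cst_mul_tvar_ne hq hij

theorem wfac_mul_wfac (hq : q ≠ 0) {i j : ι} (hij : i ≠ j) :
    wfac K ι q i j * wfac K ι q j i = 1 := by
  have := wfac_den_ne_zero hq hij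
  have := wfac_den_ne_zero hq hij.symm
  have := tvar_ne_zero (K := K) i
  have := tvar_ne_zero (K := K) j
  rw [wfac, wfac, div_mul_div_comm, div_eq_one_iff_eq (by positivity)]
  field_simp
  ring

theorem renHom_wfac (f : ι → ι) (hf : Function.Injective f) (i j : ι) :
    renHom K ι f hf (wfac K ι q i j) = wfac K ι q (f i) (f j) := by
  simp only [wfac, map_div₀, map_sub, map_mul, renHom_cst, renHom_tvar]

end Weights

section Action

open Finset

variable {K : Type} [Field K] {ι : Type} {q : K}

section ExtPerm

variable {k : ℕ} {v : Fin k → ι} (hv : Function.Injective v)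

-- `classical` would supply a different decidability instance from the one `extPerm` is built with.
theorem extPerm_apply (σ : Equiv.Perm (Fin k)) (i : Fin k) : extPerm ι v hv σ (v i) = v (σ i) := by
  let := Classical.decPred (· ∈ Set.range v)
  exact Equiv.Perm.extendDomain_apply_image σ (Equiv.ofInjective v hv) i

theorem extPerm_apply_of_notMem (σ : Equiv.Perm (Fin k)) {x : ι} (hx : x ∉ Set.range v) :
    extPerm ι v hv σ x = x := by
  let := Classical.decPred (· ∈ Set.range v)
  exact Equiv.Perm.extendDomain_apply_not_subtype σ (Equiv.ofInjective v hv) hx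

theorem extPerm_mul (σ τ : Equiv.Perm (Fin k)) :
    extPerm ι v hv (σ * τ) = extPerm ι v hv σ * extPerm ι v hv τ := by
  let := Classical.decPred (· ∈ Set.range v)
  exact (Equiv.Perm.extendDomain_mul _ σ τ).symm

theorem extPerm_one : extPerm ι v hv 1 = 1 := by
  let := Classical.decPred (· ∈ Set.range v)
  exact Equiv.Perm.extendDomain_one _

theorem extPerm_comp_of_disjoint (σ : Equiv.Perm (Fin k)) {m : ℕ} {w : Fin m → ι}
    (hvw : ∀ i i', v i ≠ w i') : extPerm ι v hv σ ∘ w = w :=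
  funext fun i' => extPerm_apply_of_notMem hv σ fun ⟨i, hi⟩ => hvw i i' hi

theorem extPerm_comp_apply {f : ι → ι} (hf : Function.Injective f) (σ : Equiv.Perm (Fin k))
    (x : ι) : extPerm ι (f ∘ v) (hf.comp hv) σ (f x) = f (extPerm ι v hv σ x) := by
  by_cases hx : x ∈ Set.range v
  · obtain ⟨i, rfl⟩ := hx
    exact (extPerm_apply (hf.comp hv) σ i).trans (congrArg f (extPerm_apply hv σ i).symm)
  · have hfx : f x ∉ Set.range (f ∘ v) := by
      rintro ⟨i, hi⟩
      exact hx ⟨i, hf hi⟩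
    rw [extPerm_apply_of_notMem _ _ hfx, extPerm_apply_of_notMem _ _ hx]

theorem extPerm_comp_embedding {m : ℕ} (e : Fin m ↪ Fin k) (σ : Equiv.Perm (Fin m)) :
    extPerm ι (v ∘ e) (hv.comp e.injective) σ = extPerm ι v hv (σ.viaFintypeEmbedding e) := by
  ext x
  by_cases hx : x ∈ Set.range v
  · obtain ⟨j, rfl⟩ := hx
    rw [extPerm_apply]
    by_cases hj : j ∈ Set.range e
    · obtain ⟨i, rfl⟩ := hj
      rw [Equiv.Perm.viaFintypeEmbedding_apply_image]
      exact extPerm_apply (v := v ∘ e) _ σ i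
    · rw [Equiv.Perm.viaFintypeEmbedding_apply_notMem_range _ _ hj]
      refine extPerm_apply_of_notMem _ _ ?_
      rintro ⟨i, hi⟩
      exact hj ⟨i, hv hi⟩
  · rw [extPerm_apply_of_notMem _ _ hx, extPerm_apply_of_notMem]
    rintro ⟨i, rfl⟩
    exact hx ⟨e i, rfl⟩

theorem extPerm_apply_pred_iff (σ : Equiv.Perm (Fin k)) {P : ι → Prop}
    (hP : ∀ i j, P (v i) ↔ P (v j)) (x : ι) : P (extPerm ι v hv σ x) ↔ P x := by
  by_cases hx : x ∈ Set.range v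
  · obtain ⟨i, rfl⟩ := hx
    rw [extPerm_apply]
    exact hP _ _
  · rw [extPerm_apply_of_notMem _ _ hx]

end ExtPerm

theorem qWeight_eq_prod_ite {k : ℕ} (v : Fin k → ι) (σ : Equiv.Perm (Fin k)) :
    qWeight K ι q v σ = ∏ p ∈ univ.filter (fun p : Fin k × Fin k => p.1 < p.2),
      if σ p.2 < σ p.1 then wfac K ι q (v (σ p.2)) (v (σ p.1)) else 1 := by
  rw [qWeight, prod_filter, prod_filter]
  refine prod_congr rfl fun p _ => ?_
  by_cases h1 : p.1 < p.2 <;> by_cases h2 : σ p.2 < σ p.1 <;> simp [h1, h2]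

theorem renHom_qWeight {k : ℕ} (v : Fin k → ι) (σ : Equiv.Perm (Fin k)) (f : ι → ι)
    (hf : Function.Injective f) :
    renHom K ι f hf (qWeight K ι q v σ) = qWeight K ι q (f ∘ v) σ := by
  simp only [qWeight, map_prod, renHom_wfac, Function.comp_apply]

def pairSort {k : ℕ} (τ : Equiv.Perm (Fin k)) (p : Fin k × Fin k) : Fin k × Fin k :=
  if τ p.1 < τ p.2 then (τ p.1, τ p.2) else (τ p.2, τ p.1)

theorem pairSort_lt {k : ℕ} (τ : Equiv.Perm (Fin k)) {p : Fin k × Fin k} (hp : p.1 < p.2) :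
    (pairSort τ p).1 < (pairSort τ p).2 := by
  have hne : τ p.1 ≠ τ p.2 := τ.injective.ne hp.ne
  unfold pairSort
  split_ifs with h
  · exact h
  · exact lt_of_le_of_ne (not_lt.mp h) hne.symm

theorem pairSort_inv_pairSort {k : ℕ} (τ : Equiv.Perm (Fin k)) {p : Fin k × Fin k}
    (hp : p.1 < p.2) : pairSort τ⁻¹ (pairSort τ p) = p := by
  unfold pairSort
  split_ifs with h1 h2 h2 <;> simp_all [not_lt_of_gt hp]

theorem prod_pairSort {M : Type} [CommMonoid M] {k : ℕ} (τ : Equiv.Perm (Fin k))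
    (F : Fin k × Fin k → M) :
    ∏ p ∈ univ.filter (fun p : Fin k × Fin k => p.1 < p.2), F (pairSort τ p)
      = ∏ p ∈ univ.filter (fun p : Fin k × Fin k => p.1 < p.2), F p := by
  have hinv : ∀ p : Fin k × Fin k, p.1 < p.2 → pairSort τ (pairSort τ⁻¹ p) = p := fun p hp => by
    simpa using pairSort_inv_pairSort τ⁻¹ hp
  refine prod_nbij' (pairSort τ) (pairSort τ⁻¹) ?_ ?_ ?_ ?_ (fun _ _ => rfl) <;>
    simp only [mem_filter, mem_univ, true_and]
  exacts [fun p hp => pairSort_lt τ hp, fun p hp => pairSort_lt τ⁻¹ hp,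
    fun p hp => pairSort_inv_pairSort τ hp, hinv]

theorem qWeight_mul (hq : q ≠ 0) {k : ℕ} {v : Fin k → ι} (hv : Function.Injective v)
    (σ τ : Equiv.Perm (Fin k)) :
    qWeight K ι q v (σ * τ) = qWeight K ι q v σ * qWeight K ι q (v ∘ σ) τ := by
  -- After reindexing the factors of `qWeight v σ` by `pairSort τ`, the factors at each pair either
  -- give the factor of `qWeight v (σ * τ)` or cancel by `wfac_mul_wfac`.
  rw [qWeight_eq_prod_ite v σ, ← prod_pairSort τ, qWeight_eq_prod_ite, qWeight_eq_prod_ite,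
    ← prod_mul_distrib]
  refine prod_congr rfl fun p hp => ?_
  have hne : τ p.1 ≠ τ p.2 := τ.injective.ne (mem_filter.mp hp).2.ne
  simp only [pairSort, Equiv.Perm.mul_apply, Function.comp_apply]
  rcases lt_or_gt_of_ne hne with h | h
  · simp only [h, not_lt_of_gt h, if_false, mul_one]; rfl
  · rcases lt_or_gt_of_ne (σ.injective.ne hne) with h' | h'
    · simp [h, h', not_lt_of_gt h, not_lt_of_gt h',
        wfac_mul_wfac hq (hv.ne (σ.injective.ne hne))]
    · simp [h, h', not_lt_of_gt h, not_lt_of_gt h']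

end Action

section Symmetrization

open Finset

variable {K : Type} [Field K] {ι : Type} {A : Type} [Ring A] [Algebra K A] {q : K}

theorem piOp_piOp (hq : q ≠ 0) {k : ℕ} {v : Fin k → ι} (hv : Function.Injective v)
    (σ τ : Equiv.Perm (Fin k)) (G : AVal K ι A) :
    piOp K ι A q v hv σ (piOp K ι A q v hv τ G) = piOp K ι A q v hv (σ * τ) G := by
  have hv' : extPerm ι v hv σ ∘ v = v ∘ σ := funext (extPerm_apply hv σ)
  simp only [piOp]
  rw [map_mul, renA_inF, renA_comp, ← mul_assoc, ← map_mul, renHom_qWeight, hv',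
    ← qWeight_mul hq hv]
  congr 1
  exact renA_congr _ _ (by rw [extPerm_mul]; rfl) G

theorem piOp_one {k : ℕ} {v : Fin k → ι} (hv : Function.Injective v) (G : AVal K ι A) :
    piOp K ι A q v hv 1 G = G := by
  have hw : qWeight K ι q v 1 = 1 :=
    prod_eq_one fun p hp => absurd (mem_filter.mp hp).2.1 (not_lt_of_gt (mem_filter.mp hp).2.2)
  simp only [piOp, hw, map_one, one_mul]
  rw [renA_congr _ Function.injective_id (by rw [extPerm_one]; rfl), renA_id]

theorem renA_piOp {k : ℕ} {v : Fin k → ι} (hv : Function.Injective v) (σ : Equiv.Perm (Fin k))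
    {f : ι → ι} (hf : Function.Injective f) (G : AVal K ι A) :
    renA K ι A f hf (piOp K ι A q v hv σ G)
      = piOp K ι A q (f ∘ v) (hf.comp hv) σ (renA K ι A f hf G) := by
  simp only [piOp]
  rw [map_mul, renA_inF, renHom_qWeight, renA_comp, renA_comp]
  congr 1
  exact renA_congr _ _ (funext fun x => (extPerm_comp_apply hv hf σ x).symm) G

theorem piOp_mul {k : ℕ} {v : Fin k → ι} (hv : Function.Injective v) (σ : Equiv.Perm (Fin k))
    (X G : AVal K ι A) :
    piOp K ι A q v hv σ (X * G)
      = renA K ι A (extPerm ι v hv σ) (Equiv.injective _) X * piOp K ι A q v hv σ G := by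
  simp only [piOp, map_mul, ← mul_assoc, (commute_inF _ _).eq]

theorem piOp_mul_right {k : ℕ} {v : Fin k → ι} (hv : Function.Injective v)
    (σ : Equiv.Perm (Fin k)) (G Y : AVal K ι A) :
    piOp K ι A q v hv σ (G * Y)
      = piOp K ι A q v hv σ G * renA K ι A (extPerm ι v hv σ) (Equiv.injective _) Y := by
  simp only [piOp, map_mul, mul_assoc]

variable (K ι A q) in
def piOpLin {k : ℕ} (v : Fin k → ι) (hv : Function.Injective v) (σ : Equiv.Perm (Fin k)) :
    AVal K ι A →ₗ[K] AVal K ι A :=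
  LinearMap.mulLeft K (inF K ι A (qWeight K ι q v σ)) ∘ₗ
    (renA K ι A (extPerm ι v hv σ) (Equiv.injective _)).toLinearMap

theorem piOpLin_apply {k : ℕ} (v : Fin k → ι) (hv : Function.Injective v)
    (σ : Equiv.Perm (Fin k)) (G : AVal K ι A) : piOpLin K ι A q v hv σ G = piOp K ι A q v hv σ G :=
  rfl

variable (K ι A q) in
def qSymLin {k : ℕ} (v : Fin k → ι) (hv : Function.Injective v) :
    AVal K ι A →ₗ[K] AVal K ι A :=
  (k.factorial : K)⁻¹ • ∑ σ : Equiv.Perm (Fin k), piOpLin K ι A q v hv σ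

theorem qSymLin_apply {k : ℕ} (v : Fin k → ι) (hv : Function.Injective v) (G : AVal K ι A) :
    qSymLin K ι A q v hv G = qSym K ι A q v hv G := by
  simp [qSymLin, qSym, LinearMap.sum_apply, piOpLin_apply]

theorem map_qSym [CharZero K] {M : Type} [AddCommGroup M] [Module K M] {k : ℕ} {v : Fin k → ι}
    (hv : Function.Injective v) (F : AVal K ι A →ₗ[K] M)
    (hF : ∀ σ G, F (piOp K ι A q v hv σ G) = F G) (G : AVal K ι A) :
    F (qSym K ι A q v hv G) = F G := by
  rw [qSym, map_smul, map_sum]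
  simp only [hF, sum_const, card_univ, Fintype.card_perm, Fintype.card_fin,
    ← Nat.cast_smul_eq_nsmul K, smul_smul]
  rw [inv_mul_cancel₀ (Nat.cast_ne_zero.mpr k.factorial_ne_zero), one_smul]

theorem qSym_piOp (hq : q ≠ 0) {k : ℕ} {v : Fin k → ι} (hv : Function.Injective v)
    (τ : Equiv.Perm (Fin k)) (G : AVal K ι A) :
    qSym K ι A q v hv (piOp K ι A q v hv τ G) = qSym K ι A q v hv G := by
  simp only [qSym, piOp_piOp hq]
  congr 1
  exact Fintype.sum_equiv (Equiv.mulRight τ) _ _ fun σ => rfl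

section Disjoint

variable {j k : ℕ} {v : Fin j → ι} {w : Fin k → ι} (hv : Function.Injective v)
  (hw : Function.Injective w) (hvw : ∀ i i', v i ≠ w i')

include hvw in
theorem extPerm_commute (τ : Equiv.Perm (Fin j)) (σ : Equiv.Perm (Fin k)) :
    Commute (extPerm ι v hv τ) (extPerm ι w hw σ) := by
  ext x
  simp only [Equiv.Perm.mul_apply]
  by_cases hx : x ∈ Set.range v
  · obtain ⟨i, rfl⟩ := hx
    have hnw : ∀ i, v i ∉ Set.range w := fun i ⟨i', h⟩ => hvw i i' h.symm
    rw [extPerm_apply_of_notMem _ _ (hnw i), extPerm_apply, extPerm_apply_of_notMem _ _ (hnw _)]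
  · rw [extPerm_apply_of_notMem _ _ hx]
    by_cases hx' : x ∈ Set.range w
    · obtain ⟨i', rfl⟩ := hx'
      rw [extPerm_apply, extPerm_apply_of_notMem]
      exact fun ⟨i, h⟩ => hvw i _ h
    · rw [extPerm_apply_of_notMem _ _ hx', extPerm_apply_of_notMem _ _ hx]

include hvw in
theorem piOp_comm (τ : Equiv.Perm (Fin j)) (σ : Equiv.Perm (Fin k)) (G : AVal K ι A) :
    piOp K ι A q v hv τ (piOp K ι A q w hw σ G) = piOp K ι A q w hw σ (piOp K ι A q v hv τ G) := by
  simp only [piOp]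
  rw [map_mul, map_mul, renA_inF, renA_inF, renHom_qWeight, renHom_qWeight, renA_comp, renA_comp,
    extPerm_comp_of_disjoint hv τ hvw,
    extPerm_comp_of_disjoint hw σ fun i' i h => hvw i i' h.symm, ← mul_assoc, ← mul_assoc,
    ← map_mul, ← map_mul, mul_comm (qWeight K ι q v τ)]
  congr 1
  exact renA_congr _ _ (congrArg DFunLike.coe (extPerm_commute hv hw hvw τ σ)) G

include hvw in
theorem qSym_piOp_comm (τ : Equiv.Perm (Fin j)) (G : AVal K ι A) :
    qSym K ι A q w hw (piOp K ι A q v hv τ G) = piOp K ι A q v hv τ (qSym K ι A q w hw G) := by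
  simp only [qSym, ← piOpLin_apply, map_smul, map_sum]
  simp only [piOpLin_apply, piOp_comm hv hw hvw]

end Disjoint

theorem vtype_ne_vtype {a b : ℕ} (hab : a ≠ b) (j k : ℕ) (i : Fin j) (i' : Fin k) :
    vtype a j i ≠ vtype b k i' :=
  fun h => hab (congrArg Prod.fst h)

variable (K A q) in
def symList (n : ℕ →₀ ℕ) (L : List ℕ) : AVal K ιM A →ₗ[K] AVal K ιM A :=
  L.foldr (fun a F => qSymLin K ιM A q (vtype a (n a)) (vtype_inj a (n a)) ∘ₗ F) LinearMap.id

theorem symList_cons_apply (n : ℕ →₀ ℕ) (a : ℕ) (L : List ℕ) (G : AVal K ιM A) :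
    symList K A q n (a :: L) G
      = qSym K ιM A q (vtype a (n a)) (vtype_inj a (n a)) (symList K A q n L G) :=
  qSymLin_apply _ _ _

theorem symList_sort_apply (n : ℕ →₀ ℕ) (G : AVal K ιM A) :
    symList K A q n (n.support.sort (· ≤ ·)) G = symM K A q n G := by
  rw [symM]
  induction n.support.sort (· ≤ ·) generalizing G with
  | nil => rfl
  | cons a L ih => rw [symList_cons_apply, ih]; rfl

theorem symM_sum (n : ℕ →₀ ℕ) {β : Type} (s : Finset β) (f : β → AVal K ιM A) :
    symM K A q n (∑ b ∈ s, f b) = ∑ b ∈ s, symM K A q n (f b) := by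
  simp only [← symList_sort_apply, map_sum]

theorem symList_piOp_of_notMem (n : ℕ →₀ ℕ) {L : List ℕ} {a : ℕ} (ha : a ∉ L) {m : ℕ}
    (τ : Equiv.Perm (Fin m)) (G : AVal K ιM A) :
    symList K A q n L (piOp K ιM A q (vtype a m) (vtype_inj a m) τ G)
      = piOp K ιM A q (vtype a m) (vtype_inj a m) τ (symList K A q n L G) := by
  induction L with
  | nil => rfl
  | cons b L ih =>
    rw [List.mem_cons, not_or] at ha
    rw [symList_cons_apply, symList_cons_apply, ih ha.2]
    exact qSym_piOp_comm _ _ (vtype_ne_vtype ha.1 m (n b)) τ _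

theorem symList_piOp (hq : q ≠ 0) (n : ℕ →₀ ℕ) {L : List ℕ} (hL : L.Nodup) {a : ℕ} (ha : a ∈ L)
    (τ : Equiv.Perm (Fin (n a))) (G : AVal K ιM A) :
    symList K A q n L (piOp K ιM A q (vtype a (n a)) (vtype_inj a (n a)) τ G)
      = symList K A q n L G := by
  induction L with
  | nil => cases ha
  | cons b L ih =>
    rw [List.nodup_cons] at hL
    rw [symList_cons_apply, symList_cons_apply]
    rcases List.mem_cons.mp ha with rfl | haL
    · rw [symList_piOp_of_notMem n hL.1, qSym_piOp hq]
    · rw [ih hL.2 haL]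

theorem symM_piOp (hq : q ≠ 0) (n : ℕ →₀ ℕ) (a : ℕ) (τ : Equiv.Perm (Fin (n a)))
    (G : AVal K ιM A) :
    symM K A q n (piOp K ιM A q (vtype a (n a)) (vtype_inj a (n a)) τ G) = symM K A q n G := by
  by_cases ha : a ∈ n.support
  · simp only [← symList_sort_apply]
    exact symList_piOp hq n (Finset.sort_nodup _ _) ((Finset.mem_sort _).mpr ha) τ G
  · have : Subsingleton (Fin (n a)) :=
      Fin.subsingleton_iff_le_one.mpr (by simp [Finsupp.notMem_support_iff.mp ha])
    rw [Subsingleton.elim τ 1, piOp_one]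

theorem symM_map_symM [CharZero K] (hq : q ≠ 0) (n m : ℕ →₀ ℕ)
    (Φ : AVal K ιM A →ₗ[K] AVal K ιM A)
    (hΦ : ∀ a (σ : Equiv.Perm (Fin (m a))), ∃ τ : Equiv.Perm (Fin (n a)), ∀ G,
      Φ (piOp K ιM A q (vtype a (m a)) (vtype_inj a (m a)) σ G)
        = piOp K ιM A q (vtype a (n a)) (vtype_inj a (n a)) τ (Φ G))
    (H : AVal K ιM A) :
    symM K A q n (Φ (symM K A q m H)) = symM K A q n (Φ H) := by
  rw [← symList_sort_apply (q := q) m H]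
  induction m.support.sort (· ≤ ·) generalizing H with
  | nil => rfl
  | cons a L ih =>
    rw [symList_cons_apply, ← ih H]
    have hF := map_qSym (q := q) (vtype_inj a (m a))
      ((symList K A q n (n.support.sort (· ≤ ·))).comp Φ) (fun σ G => ?_) (symList K A q m L H)
    · simpa only [LinearMap.comp_apply, symList_sort_apply] using hF
    obtain ⟨τ, hτ⟩ := hΦ a σ
    simp only [LinearMap.comp_apply, hτ, symList_sort_apply, symM_piOp hq]

end Symmetrization

section Window

open Finset

def windowEmb {m n : ℕ} (c : ℕ) (h : m + c ≤ n) : Fin m ↪ Fin n :=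
  ⟨fun i => ⟨i + c, by omega⟩, fun i j hij => Fin.ext (by simpa using congrArg Fin.val hij)⟩

variable {m n : ℕ} {c : ℕ} (h : m + c ≤ n)

@[simp]
theorem windowEmb_val (i : Fin m) : (windowEmb c h i : ℕ) = i + c := rfl

theorem mem_range_windowEmb (j : Fin n) :
    j ∈ Set.range (windowEmb c h) ↔ c ≤ j ∧ (j : ℕ) < m + c := by
  constructor
  · rintro ⟨i, rfl⟩
    simp
  · intro hj
    exact ⟨⟨j - c, by omega⟩, Fin.ext (by simp; omega)⟩

theorem windowEmb_lt_windowEmb {i j : Fin m} : windowEmb c h i < windowEmb c h j ↔ i < j := by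
  rw [Fin.lt_def, Fin.lt_def, windowEmb_val, windowEmb_val]
  omega

theorem mem_range_windowEmb_of_inversion (σ : Equiv.Perm (Fin m)) {P : Fin n × Fin n}
    (hP : P.1 < P.2 ∧ σ.viaFintypeEmbedding (windowEmb c h) P.2
      < σ.viaFintypeEmbedding (windowEmb c h) P.1) :
    P.1 ∈ Set.range (windowEmb c h) ∧ P.2 ∈ Set.range (windowEmb c h) := by
  set τ := σ.viaFintypeEmbedding (windowEmb c h)
  have hin : ∀ j ∈ Set.range (windowEmb c h), c ≤ (τ j : ℕ) ∧ (τ j : ℕ) < m + c := by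
    rintro j ⟨i, rfl⟩
    rw [Equiv.Perm.viaFintypeEmbedding_apply_image, ← mem_range_windowEmb h]
    exact ⟨_, rfl⟩
  have hout : ∀ j ∉ Set.range (windowEmb c h), τ j = j :=
    fun j => Equiv.Perm.viaFintypeEmbedding_apply_notMem_range _ _
  obtain ⟨h1, h2⟩ := hP
  rw [Fin.lt_def] at h1 h2
  by_cases hP1 : P.1 ∈ Set.range (windowEmb c h) <;>
    by_cases hP2 : P.2 ∈ Set.range (windowEmb c h)
  · exact ⟨hP1, hP2⟩
  · have := hin _ hP1
    rw [hout _ hP2] at h2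
    rw [mem_range_windowEmb] at hP1 hP2
    omega
  · have := hin _ hP2
    rw [hout _ hP1] at h2
    rw [mem_range_windowEmb] at hP1 hP2
    omega
  · rw [hout _ hP1, hout _ hP2] at h2
    omega

theorem qWeight_comp_windowEmb {K ι : Type} [Field K] (q : K) (v : Fin n → ι)
    (σ : Equiv.Perm (Fin m)) :
    qWeight K ι q (v ∘ windowEmb c h) σ
      = qWeight K ι q v (σ.viaFintypeEmbedding (windowEmb c h)) := by
  set e := windowEmb c h
  have hinv : univ.filter (fun P : Fin n × Fin n =>
        P.1 < P.2 ∧ σ.viaFintypeEmbedding e P.2 < σ.viaFintypeEmbedding e P.1)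
      = (univ.filter fun p : Fin m × Fin m => p.1 < p.2 ∧ σ p.2 < σ p.1).map (e.prodMap e) := by
    ext P
    simp only [mem_filter, mem_univ, true_and, mem_map, Function.Embedding.coe_prodMap,
      Prod.map_apply, Prod.exists]
    constructor
    · intro hP
      obtain ⟨⟨i, hi⟩, ⟨j, hj⟩⟩ := mem_range_windowEmb_of_inversion h σ hP
      rw [← hi, ← hj, Equiv.Perm.viaFintypeEmbedding_apply_image,
        Equiv.Perm.viaFintypeEmbedding_apply_image, windowEmb_lt_windowEmb,
        windowEmb_lt_windowEmb] at hP
      exact ⟨i, j, hP, Prod.ext hi hj⟩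
    · rintro ⟨i, j, hij, rfl⟩
      rw [Equiv.Perm.viaFintypeEmbedding_apply_image, Equiv.Perm.viaFintypeEmbedding_apply_image,
        windowEmb_lt_windowEmb, windowEmb_lt_windowEmb]
      exact hij
  rw [qWeight, qWeight, hinv, prod_map]
  simp only [Function.Embedding.coe_prodMap, Prod.map_fst, Prod.map_snd,
    Equiv.Perm.viaFintypeEmbedding_apply_image, Function.comp_apply]

theorem piOp_comp_windowEmb {K ι A : Type} [Field K] [Ring A] [Algebra K A] (q : K)
    {v : Fin n → ι} (hv : Function.Injective v) (σ : Equiv.Perm (Fin m)) (G : AVal K ι A) :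
    piOp K ι A q (v ∘ windowEmb c h) (hv.comp (windowEmb c h).injective) σ G
      = piOp K ι A q v hv (σ.viaFintypeEmbedding (windowEmb c h)) G := by
  simp only [piOp, qWeight_comp_windowEmb]
  congr 1
  exact renA_congr _ _ (congrArg DFunLike.coe (extPerm_comp_embedding hv _ σ)) G

theorem mul_renA_shiftFun_piOp_mul {K A : Type} [Field K] [Ring A] [Algebra K A] {q : K}
    {g : ℕ → ℕ} {a : ℕ} (h : m + g a ≤ n) (σ : Equiv.Perm (Fin m)) {X Y : AVal K ιM A}
    (hX : renA K ιM A (extPerm ιM (vtype a n ∘ windowEmb (g a) h)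
      ((vtype_inj a n).comp (windowEmb _ h).injective) σ) (Equiv.injective _) X = X)
    (hY : renA K ιM A (extPerm ιM (vtype a n ∘ windowEmb (g a) h)
      ((vtype_inj a n).comp (windowEmb _ h).injective) σ) (Equiv.injective _) Y = Y)
    (G : AVal K ιM A) :
    X * (renA K ιM A (shiftFun g) (shiftFun_inj g)
        (piOp K ιM A q (vtype a m) (vtype_inj a m) σ G) * Y)
      = piOp K ιM A q (vtype a n) (vtype_inj a n) (σ.viaFintypeEmbedding (windowEmb (g a) h))
          (X * (renA K ιM A (shiftFun g) (shiftFun_inj g) G * Y)) := by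
  rw [← piOp_comp_windowEmb h q (vtype_inj a n), piOp_mul, piOp_mul_right, hX, hY, renA_piOp]
  rfl

end Window

section Zfactor

open Finset

variable {K : Type} [Field K] {q : K}

variable (K q) in
def zfac (i j : ιM) : RatF K ιM :=
  (cst K ιM q - cst K ιM q⁻¹ * (tvar K ιM i / tvar K ιM j)) / (1 - tvar K ιM i / tvar K ιM j)

theorem Zser_eq_prod_zfac (N : ℕ) (s n : ℕ →₀ ℕ) :
    Zser K q N s n = ∏ b ∈ range (N - 2), ∏ l ∈ Ico (s b) (n b),
      ∏ l' ∈ range (s (b + 1)), zfac K q (b, l) (b + 1, l') :=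
  rfl

theorem renHom_zfac (f : ιM → ιM) (hf : Function.Injective f) (i j : ιM) :
    renHom K ιM f hf (zfac K q i j) = zfac K q (f i) (f j) := by
  simp only [zfac, map_div₀, map_sub, map_mul, map_one, renHom_cst, renHom_tvar]

theorem prod_fiber_perm {M : Type} [CommMonoid M] (E : Equiv.Perm ιM)
    (hE : ∀ x, (E x).1 = x.1) (b : ℕ) {S : Finset ℕ} (hS : ∀ j, (E (b, j)).2 ∈ S ↔ j ∈ S)
    (f : ℕ → M) : ∏ j ∈ S, f (E (b, j)).2 = ∏ j ∈ S, f j := by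
  have hEb : ∀ j, E (b, j) = (b, (E (b, j)).2) := fun j => Prod.ext (hE _) rfl
  have hEb' : ∀ j, E.symm (b, j) = (b, (E.symm (b, j)).2) := fun j =>
    Prod.ext (by simpa using (hE (E.symm (b, j))).symm) rfl
  refine prod_nbij' (fun j => (E (b, j)).2) (fun j => (E.symm (b, j)).2) (fun j hj => (hS j).2 hj)
    (fun j hj => ?_) (fun j _ => ?_) (fun j _ => ?_) fun _ _ => rfl
  · rw [← hS, ← hEb', Equiv.apply_symm_apply]
    exact hj
  · simp only [← hEb, Equiv.symm_apply_apply]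
  · simp only [← hEb', Equiv.apply_symm_apply]

theorem renHom_Zser_of_perm (N : ℕ) (s n : ℕ →₀ ℕ) (E : Equiv.Perm ιM)
    (hE : ∀ x, (E x).1 = x.1) (hlow : ∀ x, (E x).2 < s x.1 ↔ x.2 < s x.1)
    (hhigh : ∀ x, (E x).2 ∈ Ico (s x.1) (n x.1) ↔ x.2 ∈ Ico (s x.1) (n x.1)) :
    renHom K ιM E E.injective (Zser K q N s n) = Zser K q N s n := by
  have hEb : ∀ b j, E (b, j) = (b, (E (b, j)).2) := fun b j => Prod.ext (hE _) rfl
  simp only [Zser_eq_prod_zfac, map_prod, renHom_zfac]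
  refine prod_congr rfl fun b _ => ?_
  refine Eq.trans ?_ (prod_fiber_perm E hE b (fun j => hhigh (b, j))
    fun l => ∏ l' ∈ range (s (b + 1)), zfac K q (b, l) (b + 1, l'))
  refine prod_congr rfl fun l _ => Eq.trans ?_ (prod_fiber_perm E hE (b + 1) (S := range _)
    (by simpa using fun j => hlow (b + 1, j)) fun l' => zfac K q (b, (E (b, l)).2) (b + 1, l'))
  refine prod_congr rfl fun l' _ => ?_
  rw [← hEb, ← hEb]

theorem renHom_extPerm_Zser (N : ℕ) (s n : ℕ →₀ ℕ) {k : ℕ} {u : Fin k → ιM}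
    (hu : Function.Injective u) (σ : Equiv.Perm (Fin k)) (hfst : ∀ i j, (u i).1 = (u j).1)
    (hlow : ∀ i j, (u i).2 < s (u i).1 ↔ (u j).2 < s (u j).1)
    (hhigh : ∀ i j, (u i).2 ∈ Ico (s (u i).1) (n (u i).1) ↔ (u j).2 ∈ Ico (s (u j).1) (n (u j).1)) :
    renHom K ιM (extPerm ιM u hu σ) (Equiv.injective _) (Zser K q N s n) = Zser K q N s n := by
  have hE : ∀ x, (extPerm ιM u hu σ x).1 = x.1 := fun x =>
    (extPerm_apply_pred_iff hu σ (P := fun y => y.1 = x.1)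
      (fun i j => by rw [hfst i j]) x).mpr rfl
  refine renHom_Zser_of_perm N s n _ hE (fun x => ?_) (fun x => ?_)
  · simpa only [hE x] using extPerm_apply_pred_iff hu σ (P := fun y => y.2 < s y.1) hlow x
  · simpa only [hE x] using
      extPerm_apply_pred_iff hu σ (P := fun y => y.2 ∈ Ico (s y.1) (n y.1)) hhigh x

theorem renHom_extPerm_vtype_Zser (N : ℕ) (s n : ℕ →₀ ℕ) (a : ℕ) (σ : Equiv.Perm (Fin (s a))) :
    renHom K ιM (extPerm ιM (vtype a (s a)) (vtype_inj _ _) σ) (Equiv.injective _)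
      (Zser K q N s n) = Zser K q N s n :=
  renHom_extPerm_Zser N s n _ σ (fun _ _ => rfl) (fun i j => iff_of_true i.2 j.2)
    (fun i j => iff_of_false (by simp [vtype]) (by simp [vtype]))

theorem renHom_extPerm_window_Zser (N : ℕ) (s n : ℕ →₀ ℕ) (a : ℕ) {m : ℕ} (h : m + s a ≤ n a)
    (σ : Equiv.Perm (Fin m)) :
    renHom K ιM (extPerm ιM (vtype a (n a) ∘ windowEmb (s a) h)
        ((vtype_inj _ _).comp (windowEmb _ h).injective) σ) (Equiv.injective _)
      (Zser K q N s n) = Zser K q N s n := by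
  have hu : ∀ i, (vtype a (n a) ∘ windowEmb (s a) h) i = (a, i + s a) := fun i => rfl
  refine renHom_extPerm_Zser N s n _ σ (fun _ _ => rfl) (fun i j => ?_) (fun i j => ?_)
  · exact iff_of_false (by rw [hu]; simp) (by rw [hu]; simp)
  · exact iff_of_true (by rw [hu]; simp; omega) (by rw [hu]; simp; omega)

theorem renHom_shiftFun_Zser (N : ℕ) (g : ℕ → ℕ) (r m : ℕ →₀ ℕ) :
    renHom K ιM (shiftFun g) (shiftFun_inj g) (Zser K q N r m)
      = ∏ b ∈ range (N - 2), ∏ l ∈ Ico (r b + g b) (m b + g b),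
          ∏ l' ∈ Ico (g (b + 1)) (r (b + 1) + g (b + 1)), zfac K q (b, l) (b + 1, l') := by
  simp only [Zser_eq_prod_zfac, map_prod, renHom_zfac, shiftFun]
  refine prod_congr rfl fun b _ => (prod_congr rfl fun l _ => ?_).trans (prod_Ico_add'
    (fun l => ∏ l' ∈ Ico (g (b + 1)) (r (b + 1) + g (b + 1)), zfac K q (b, l) (b + 1, l')) _ _ _)
  rw [range_eq_Ico]
  exact (prod_Ico_add' (fun l' => zfac K q (b, l + g b) (b + 1, l')) _ _ _).trans
    (by rw [Nat.zero_add])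

theorem Zser_mul_renHom_Zser (N : ℕ) {s r n : ℕ →₀ ℕ} (hsr : s + r ≤ n) :
    Zser K q N s n * renHom K ιM (shiftFun (s ·)) (shiftFun_inj _) (Zser K q N r (n - s))
      = Zser K q N (s + r) n * Zser K q N s (s + r) := by
  rw [renHom_shiftFun_Zser, Zser_eq_prod_zfac, Zser_eq_prod_zfac, Zser_eq_prod_zfac,
    ← prod_mul_distrib, ← prod_mul_distrib]
  refine prod_congr rfl fun b _ => ?_
  -- Split `[s_b, n_b)` at `s_b + r_b` and `[0, s_{b+1} + r_{b+1})` at `s_{b+1}`.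
  have hb := Finsupp.le_def.mp hsr b
  simp only [Finsupp.coe_add, Finsupp.coe_tsub, Pi.add_apply, Pi.sub_apply] at hb ⊢
  rw [Nat.sub_add_cancel (by omega), add_comm (r b), add_comm (r (b + 1)),
    ← prod_Ico_consecutive _ (Nat.le_add_right (s b) (r b)) hb]
  simp only [← prod_range_mul_prod_Ico _ (Nat.le_add_right (s (b + 1)) (r (b + 1))),
    prod_mul_distrib]
  ring

end Zfactor

section StarProduct

open Finset

theorem sum_Iic_sum_Iic_tsub {α M : Type*} [AddCommMonoid M] [AddCommMonoid α] [PartialOrder α]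
    [CanonicallyOrderedAdd α] [Sub α] [OrderedSub α] [AddLeftReflectLE α] [LocallyFiniteOrderBot α]
    (n : α) (F : α → α → M) :
    ∑ s ∈ Iic n, ∑ r ∈ Iic (n - s), F (s + r) s = ∑ p ∈ Iic n, ∑ t ∈ Iic p, F p t := by
  rw [sum_sigma', sum_sigma']
  refine sum_nbij' (fun x => ⟨x.1 + x.2, x.1⟩) (fun y => ⟨y.2, y.1 - y.2⟩) ?_ ?_ ?_ ?_
    fun _ _ => rfl <;> simp only [mem_sigma, mem_Iic, Sigma.forall]
  · exact fun s r ⟨hs, hr⟩ => ⟨(le_tsub_iff_left hs).mp hr, le_self_add⟩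
  · exact fun p t ⟨hp, ht⟩ => ⟨ht.trans hp, tsub_le_tsub_right hp t⟩
  · exact fun s r _ => by simp
  · exact fun p t ⟨_, ht⟩ => by simp [add_tsub_cancel_of_le ht]

variable {K : Type} [Field K] [CharZero K] {A : Type} [Ring A] [Algebra K A] {q : K}

theorem shiftFun_comp_shiftFun (s r : ℕ →₀ ℕ) :
    shiftFun (s ·) ∘ shiftFun (r ·) = shiftFun ((s + r) ·) :=
  funext fun x => Prod.ext rfl (by simp [shiftFun, add_assoc, add_comm (r x.1)])

variable (K A q) in
/-- `Sym̄_{t̄_{n̄}}(Z_{p̄}(t̄_{n̄}) Z_{t̄}(t̄_{p̄}) 𝒜(t̄_{(p̄,n̄]}) ℬ(t̄_{(t̄,p̄]}) 𝒞(t̄_{(0̄,t̄]}))`,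
the common summand of the coefficients of `(𝒜 ⋆ ℬ) ⋆ 𝒞` and `𝒜 ⋆ (ℬ ⋆ 𝒞)`. -/
def tripleTerm (N : ℕ) (f g h : (ℕ →₀ ℕ) → AVal K ιM A) (n p t : ℕ →₀ ℕ) : AVal K ιM A :=
  symM K A q n (inF K ιM A (Zser K q N p n * Zser K q N t p) *
    (renA K ιM A (shiftFun (p ·)) (shiftFun_inj _) (f (n - p)) *
      (renA K ιM A (shiftFun (t ·)) (shiftFun_inj _) (g (p - t)) * h t)))

theorem symM_renA_starM_mul_eq_sum (hq : q ≠ 0) (N : ℕ) (f g h : (ℕ →₀ ℕ) → AVal K ιM A)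
    (hh : ∀ (n : ℕ →₀ ℕ) (F : ιM → ιM) (hF : Function.Injective F),
      (∀ a i, i < n a → F (a, i) = (a, i)) → renA K ιM A F hF (h n) = h n)
    {n s : ℕ →₀ ℕ} (hs : s ≤ n) :
    symM K A q n (inF K ιM A (Zser K q N s n) *
        (renA K ιM A (shiftFun (s ·)) (shiftFun_inj _) (starM K A q N f g (n - s)) * h s))
      = ∑ r ∈ Iic (n - s), tripleTerm K A q N f g h n (s + r) s := by
  have hsn : ∀ a, (n - s) a + s a ≤ n a := fun a => by
    simpa using (tsub_add_cancel_of_le hs).le a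
  let Φ : AVal K ιM A →ₗ[K] AVal K ιM A := LinearMap.mulLeft K (inF K ιM A (Zser K q N s n)) ∘ₗ
    LinearMap.mulRight K (h s) ∘ₗ (renA K ιM A (shiftFun (s ·)) (shiftFun_inj _)).toLinearMap
  have hΦ : ∀ a (σ : Equiv.Perm (Fin ((n - s) a))), ∃ τ : Equiv.Perm (Fin (n a)), ∀ G,
      Φ (piOp K ιM A q (vtype a ((n - s) a)) (vtype_inj _ _) σ G)
        = piOp K ιM A q (vtype a (n a)) (vtype_inj _ _) τ (Φ G) := by
    intro a σ
    refine ⟨_, mul_renA_shiftFun_piOp_mul (hsn a) σ ?_ ?_⟩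
    · rw [renA_inF]
      exact congrArg _ (renHom_extPerm_window_Zser N s n a (hsn a) σ)
    · refine hh s _ _ fun b i hi => extPerm_apply_of_notMem _ σ ?_
      rintro ⟨j, hj⟩
      obtain ⟨rfl, rfl⟩ := Prod.mk.inj hj
      exact absurd hi (Nat.not_lt.mpr (Nat.le_add_left _ _))
  change symM K A q n (Φ (starM K A q N f g (n - s)))
    = ∑ r ∈ Iic (n - s), tripleTerm K A q N f g h n (s + r) s
  rw [starM, map_sum, symM_sum]
  refine sum_congr rfl fun r hr => ?_
  rw [symM_map_symM hq n (n - s) Φ hΦ, tripleTerm, add_tsub_cancel_left, tsub_add_eq_tsub_tsub,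
    ← Zser_mul_renHom_Zser N ((le_tsub_iff_left hs).mp (mem_Iic.mp hr))]
  simp only [Φ, LinearMap.comp_apply, LinearMap.mulLeft_apply, LinearMap.mulRight_apply,
    AlgHom.toLinearMap_apply, map_mul, renA_inF, renA_comp, map_mul, mul_assoc]
  rw [renA_congr _ (shiftFun_inj _) (shiftFun_comp_shiftFun s r)]

theorem symM_mul_starM_eq_sum (hq : q ≠ 0) (N : ℕ) (f g h : (ℕ →₀ ℕ) → AVal K ιM A)
    {n p : ℕ →₀ ℕ} (hp : p ≤ n) :
    symM K A q n (inF K ιM A (Zser K q N p n) *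
        (renA K ιM A (shiftFun (p ·)) (shiftFun_inj _) (f (n - p)) * starM K A q N g h p))
      = ∑ t ∈ Iic p, tripleTerm K A q N f g h n p t := by
  have hpn : ∀ a, p a + 0 ≤ n a := fun a => by simpa using hp a
  set X := inF K ιM A (Zser K q N p n) * renA K ιM A (shiftFun (p ·)) (shiftFun_inj _) (f (n - p))
  have hX : ∀ a (σ : Equiv.Perm (Fin (p a))),
      renA K ιM A (extPerm ιM (vtype a (p a)) (vtype_inj _ _) σ) (Equiv.injective _) X = X := by
    intro a σ
    rw [map_mul, renA_inF, renHom_extPerm_vtype_Zser, renA_comp]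
    congr 1
    refine renA_congr _ _ (funext fun x => extPerm_apply_of_notMem _ σ ?_) _
    rintro ⟨j, hj⟩
    obtain ⟨rfl, hj⟩ := Prod.mk.inj hj
    simp at hj
    omega
  have hΦ : ∀ a (σ : Equiv.Perm (Fin (p a))), ∃ τ : Equiv.Perm (Fin (n a)), ∀ G,
      LinearMap.mulLeft K X (piOp K ιM A q (vtype a (p a)) (vtype_inj _ _) σ G)
        = piOp K ιM A q (vtype a (n a)) (vtype_inj _ _) τ (LinearMap.mulLeft K X G) := by
    intro a σ
    refine ⟨σ.viaFintypeEmbedding (windowEmb 0 (hpn a)), fun G => ?_⟩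
    rw [← piOp_comp_windowEmb (hpn a) q (vtype_inj a (n a))]
    change X * _ = piOp K ιM A q (vtype a (p a)) (vtype_inj _ _) σ (X * G)
    rw [piOp_mul, hX]
  rw [← mul_assoc, starM, mul_sum, symM_sum]
  refine sum_congr rfl fun t _ => ?_
  rw [← LinearMap.mulLeft_apply (R := K), symM_map_symM hq n p _ hΦ, LinearMap.mulLeft_apply,
    tripleTerm, map_mul, mul_assoc, mul_assoc, ← mul_assoc (renA K ιM A _ _ _),
    ← (commute_inF _ _).eq, mul_assoc]

end StarProduct

theorem star_assoc_general
    (K : Type) [Field K] [CharZero K] (q : K) (hq : q ≠ 0)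
    (A : Type) [Ring A] [Algebra K A] (N : ℕ) (SA SB SC : QSeriesM K A q N) (n : ℕ →₀ ℕ) :
    starM K A q N (starM K A q N SA.coeff SB.coeff) SC.coeff n =
      starM K A q N SA.coeff (starM K A q N SB.coeff SC.coeff) n := by
  calc starM K A q N (starM K A q N SA.coeff SB.coeff) SC.coeff n
      = ∑ s ∈ Finset.Iic n, ∑ r ∈ Finset.Iic (n - s),
          tripleTerm K A q N SA.coeff SB.coeff SC.coeff n (s + r) s :=
        Finset.sum_congr rfl fun s hs =>
          symM_renA_starM_mul_eq_sum hq N _ _ _ SC.supp_vars (Finset.mem_Iic.mp hs)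
    _ = ∑ p ∈ Finset.Iic n, ∑ t ∈ Finset.Iic p,
          tripleTerm K A q N SA.coeff SB.coeff SC.coeff n p t :=
        sum_Iic_sum_Iic_tsub n _
    _ = starM K A q N SA.coeff (starM K A q N SB.coeff SC.coeff) n :=
        Finset.sum_congr rfl fun p hp =>
          (symM_mul_starM_eq_sum hq N _ _ _ (Finset.mem_Iic.mp hp)).symm

/-- The `⋆`-product of `q`-symmetric generating series is associative:
for every multi-index `n̄` the coefficients of `(𝒜 ⋆ ℬ) ⋆ 𝒞` and `𝒜 ⋆ (ℬ ⋆ 𝒞)` coincide. -/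
theorem star_assoc
    (K : Type) [Field K] [CharZero K] (q : K) (hq : q ≠ 0) (hq2 : q ^ 2 ≠ 1)
    (A : Type) [Ring A] [Algebra K A] (N : ℕ) (hN : 2 ≤ N) (SA SB SC : QSeriesM K A q N) (n : ℕ →₀ ℕ) :
    starM K A q N (starM K A q N SA.coeff SB.coeff) SC.coeff n =
      starM K A q N SA.coeff (starM K A q N SB.coeff SC.coeff) n :=
  star_assoc_general K q hq A N SA SB SC n
end
end

section
/- Let ℰ(ū) be a q-symmetric generating series (with free coefficient 1) whose coefficients ℰ(t̄_{m̄}) vanish unless the multi-index m̄ is admissible, and let 𝒟(ū) be its ⋆-inverse, 𝒟(ū) ⋆ ℰ(ū) = 1. Then the coefficients 𝒟(t̄_{k̄}) of 𝒟 are nonzero only if the multi-index k̄ is admissible, i.e. only if k_1 ≥ k_2 ≥ ⋯ ≥ k_{N−1} ≥ 0. -/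
noncomputable section

open scoped TensorProduct
open MvPolynomial

/-! ## Rational functions and the q-symmetrization machinery -/

variable (K : Type) [Field K] (ι : Type)

variable (A : Type) [Ring A] [Algebra K A]

variable (q : K)

/-!
The `s̄ = 0̄` term of `(𝒟 ⋆ ℰ)(t̄_{n̄})` is `𝒟(t̄_{n̄})` itself: `Z_{0̄} = 1`, the shift by `0̄` is
trivial, `ℰ` has free coefficient `1`, and `Sym̄` fixes the `q`-symmetric function `𝒟(t̄_{n̄})`.
In every other term `s̄ ≠ 0̄`; either `s̄` is not admissible and `ℰ(t̄_{s̄}) = 0`, or it is, and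
then `n̄ − s̄` is not admissible (admissible multi-indices are closed under addition), so
`𝒟(t̄_{n̄−s̄}) = 0` by well-founded induction on `n̄`. For `n̄ ≠ 0̄` this leaves
`𝒟(t̄_{n̄}) = (𝒟 ⋆ ℰ)(t̄_{n̄}) = 0`.
-/

theorem qSym_zero {k : ℕ} (v : Fin k → ι) (hv : Function.Injective v) :
    qSym K ι A q v hv 0 = 0 := by
  simp [qSym, piOp]

theorem qSym_eq_self [CharZero K] {k : ℕ} (v : Fin k → ι) (hv : Function.Injective v)
    (G : AVal K ι A) (h : ∀ σ, piOp K ι A q v hv σ G = G) : qSym K ι A q v hv G = G := by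
  simp only [qSym, h, Finset.sum_const, Finset.card_univ, Fintype.card_perm, Fintype.card_fin]
  rw [← Nat.cast_smul_eq_nsmul K, smul_smul,
    inv_mul_cancel₀ (by exact_mod_cast k.factorial_ne_zero), one_smul]

theorem symM_zero (n : ℕ →₀ ℕ) : symM K A q n 0 = 0 := by
  unfold symM
  induction n.support.sort (· ≤ ·) with
  | nil => rfl
  | cons a l ih => simp only [List.foldr_cons, Function.comp_apply, ih, qSym_zero]

theorem symM_eq_self [CharZero K] (n : ℕ →₀ ℕ) (G : AVal K ιM A)
    (h : ∀ a (σ : Equiv.Perm (Fin (n a))),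
      piOp K ιM A q (vtype a (n a)) (vtype_inj a (n a)) σ G = G) :
    symM K A q n G = G := by
  unfold symM
  induction n.support.sort (· ≤ ·) with
  | nil => rfl
  | cons a l ih =>
    simp only [List.foldr_cons, Function.comp_apply, ih]
    exact qSym_eq_self K ιM A q _ _ G (h a)

theorem Zser_zero_left (N : ℕ) (n : ℕ →₀ ℕ) : Zser K q N 0 n = 1 := by
  simp [Zser]

theorem tsub_lt_self_of_le {α : Type*} [AddCommMonoid α] [IsLeftCancelAdd α] [PartialOrder α]
    [CanonicallyOrderedAdd α] [Sub α] [OrderedSub α] {a b : α} (hba : b ≤ a) (hb : b ≠ 0) :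
    a - b < a :=
  tsub_le_self.lt_of_ne fun h => hb (by simpa [h] using tsub_add_cancel_of_le hba)

theorem adm_zero : Adm 0 := fun _ => le_rfl

theorem Adm.add {m n : ℕ →₀ ℕ} (hm : Adm m) (hn : Adm n) : Adm (m + n) :=
  fun a => add_le_add (hm a) (hn a)

theorem not_adm_tsub {s n : ℕ →₀ ℕ} (hsn : s ≤ n) (hs : Adm s) (hn : ¬ Adm n) :
    ¬ Adm (n - s) :=
  fun h => hn (tsub_add_cancel_of_le hsn ▸ h.add hs)

def starSummand (N : ℕ) (f g : (ℕ →₀ ℕ) → AVal K ιM A) (n s : ℕ →₀ ℕ) : AVal K ιM A :=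
  symM K A q n
    (inF K ιM A (Zser K q N s n) *
      (renA K ιM A (shiftFun (s ·)) (shiftFun_inj _) (f (n - s)) * g s))

section StarSummand

variable {K A q} {N : ℕ} {f g : (ℕ →₀ ℕ) → AVal K ιM A} {n s : ℕ →₀ ℕ}

theorem starM_eq_sum_starSummand :
    starM K A q N f g n = ∑ s ∈ Finset.Iic n, starSummand K A q N f g n s :=
  rfl

theorem starSummand_eq_zero_of_left (h : f (n - s) = 0) : starSummand K A q N f g n s = 0 := by
  rw [starSummand, h, map_zero, zero_mul, mul_zero, symM_zero]

theorem starSummand_eq_zero_of_right (h : g s = 0) : starSummand K A q N f g n s = 0 := by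
  rw [starSummand, h, mul_zero, mul_zero, symM_zero]

theorem QSeriesM.starSummand_zero [CharZero K] (SD SE : QSeriesM K A q N) :
    starSummand K A q N SD.coeff SE.coeff n 0 = SD.coeff n := by
  have hshift : renA K ιM A (shiftFun ((0 : ℕ →₀ ℕ) ·)) (shiftFun_inj _) (SD.coeff n) =
      SD.coeff n :=
    SD.supp_vars n _ _ fun a i _ => by simp [shiftFun]
  rw [starSummand, Zser_zero_left, map_one, one_mul, tsub_zero, hshift, SE.coeff_zero, mul_one,
    symM_eq_self K A q n _ (SD.qsymm n)]

end StarSummand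

theorem star_inverse_admissible_general
    (K : Type) [Field K] [CharZero K] (q : K)
    (A : Type) [Ring A] [Algebra K A] (N : ℕ) (SE : QSeriesM K A q N) (hE : ∀ n, ¬ Adm n → SE.coeff n = 0)
    (SD : QSeriesM K A q N) (hD : ∀ n, starM K A q N SD.coeff SE.coeff n = oneM K A n) :
    ∀ n, ¬ Adm n → SD.coeff n = 0 := by
  intro n
  induction n using WellFoundedLT.induction with
  | _ n ih =>
    intro hn
    have hn0 : n ≠ 0 := by
      rintro rfl
      exact hn adm_zero
    have hrest : ∀ s ∈ (Finset.Iic n).erase 0, starSummand K A q N SD.coeff SE.coeff n s = 0 := by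
      intro s hs
      obtain ⟨hs0, hsn⟩ := Finset.mem_erase.mp hs
      have hsn : s ≤ n := Finset.mem_Iic.mp hsn
      by_cases hsA : Adm s
      · exact starSummand_eq_zero_of_left
          (ih _ (tsub_lt_self_of_le hsn hs0) (not_adm_tsub hsn hsA hn))
      · exact starSummand_eq_zero_of_right (hE s hsA)
    have hstar := hD n
    rw [starM_eq_sum_starSummand, ← Finset.add_sum_erase _ _ (Finset.mem_Iic.mpr zero_le),
      Finset.sum_eq_zero hrest, add_zero, SD.starSummand_zero] at hstar
    simpa [oneM, hn0] using hstar

/-- If the coefficients of a `q`-symmetric generating series `ℰ(ū)` vanish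
unless the multi-index is admissible (`m_1 ≥ m_2 ≥ ⋯ ≥ m_{N−1} ≥ 0`), then the coefficients
of its `⋆`-inverse `𝒟(ū)` also vanish at all non-admissible multi-indices. -/
theorem star_inverse_admissible
    (K : Type) [Field K] [CharZero K] (q : K) (hq : q ≠ 0) (hq2 : q ^ 2 ≠ 1)
    (A : Type) [Ring A] [Algebra K A] (N : ℕ) (hN : 2 ≤ N) (SE : QSeriesM K A q N) (hE : ∀ n, ¬ Adm n → SE.coeff n = 0)
    (SD : QSeriesM K A q N) (hD : ∀ n, starM K A q N SD.coeff SE.coeff n = oneM K A n) :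
    ∀ n, ¬ Adm n → SD.coeff n = 0 :=
  star_inverse_admissible_general K q A N SE hE SD hD
end
end
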